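/- Let 0 < α < 1 be irrational, n ≥ 1, and let c/d ∈ F_n be a reduced fraction that is not a Farey approximation to α. Then |α - c/d| > 1/n². -/

import Mathlib

open scoped Classical

/-- The mediant of two rationals (written in lowest terms): (a+c)/(b+d). -/
def mediant (x y : ℚ) : ℚ := ((x.num + y.num : ℤ) : ℚ) / (((x.den : ℤ) + (y.den : ℤ) : ℤ) : ℚ)

/-- The pair (best lower approximation, best upper approximation) to α among the Farey
approximations produced so far, starting from (0/1, 1/1). -/
noncomputable def sternPair (α : ℝ) : ℕ → ℚ × ℚ
  | 0 => (0, 1)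
  | k + 1 =>
      let p := sternPair α k
      let m := mediant p.1 p.2
      if (m : ℝ) < α then (m, p.2) else (p.1, m)

/-- The sequence of Farey approximations to α: F₀ = 0/1, F₁ = 1/1, and the (k+2)-nd is the
mediant of the best upper and lower approximations among the previous ones. -/
noncomputable def fareyApprox (α : ℝ) : ℕ → ℚ
  | 0 => 0
  | 1 => 1
  | k + 2 => mediant (sternPair α k).1 (sternPair α k).2

/- ### Auxiliary lemmas -/

lemma rat_lt_iff (p q : ℚ) : p < q ↔ p.num * q.den < q.num * p.den := by
  conv_lhs => rw [← Rat.num_div_den p, ← Rat.num_div_den q]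
  rw [div_lt_div_iff₀ (by exact_mod_cast p.pos) (by exact_mod_cast q.pos)]
  exact_mod_cast Iff.rfl

lemma mediant_num_den {l u : ℚ} (h : u.num * l.den - l.num * u.den = 1) :
    (mediant l u).num = l.num + u.num ∧ ((mediant l u).den : ℤ) = (l.den : ℤ) + u.den := by
  have hb : (0:ℤ) < (l.den : ℤ) + u.den := by positivity
  have hcop : Nat.Coprime (l.num + u.num).natAbs ((l.den : ℤ) + (u.den : ℤ)).natAbs := by
    have hg1 : (Int.gcd (l.num + u.num) ((l.den:ℤ) + u.den) : ℤ) ∣ (l.num + u.num) :=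
      Int.gcd_dvd_left _ _
    have hg2 : (Int.gcd (l.num + u.num) ((l.den:ℤ) + u.den) : ℤ) ∣ ((l.den:ℤ) + u.den) :=
      Int.gcd_dvd_right _ _
    have hdvd : (Int.gcd (l.num + u.num) ((l.den:ℤ) + u.den) : ℤ) ∣
        ((l.num + u.num) * l.den - l.num * ((l.den:ℤ) + u.den)) :=
      dvd_sub (hg1.mul_right _) (hg2.mul_left _)
    have heq : (l.num + u.num) * l.den - l.num * ((l.den:ℤ) + u.den)
        = u.num * l.den - l.num * u.den := by ring
    rw [heq, h] at hdvd
    have : Int.gcd (l.num + u.num) ((l.den:ℤ) + u.den) ∣ 1 := by exact_mod_cast hdvd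
    exact Nat.dvd_one.mp this
  exact ⟨Rat.num_div_eq_of_coprime hb hcop, Rat.den_div_eq_of_coprime hb hcop⟩

lemma den_between {l u q : ℚ} (hdet : u.num * l.den - l.num * u.den = 1)
    (h1 : l < q) (h2 : q < u) : l.den + u.den ≤ q.den := by
  have e1 : l.num * q.den < q.num * l.den := (rat_lt_iff l q).1 h1
  have e2 : q.num * u.den < u.num * q.den := (rat_lt_iff q u).1 h2
  have ha : (1:ℤ) ≤ q.num * l.den - l.num * q.den := by linarith
  have hb : (1:ℤ) ≤ u.num * q.den - q.num * u.den := by linarith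
  have hld : (1:ℤ) ≤ l.den := by exact_mod_cast l.pos
  have hud : (1:ℤ) ≤ u.den := by exact_mod_cast u.pos
  have hq : (q.den : ℤ) = (l.den : ℤ) * (u.num * q.den - q.num * u.den)
      + (u.den : ℤ) * (q.num * l.den - l.num * q.den) := by
    linear_combination (-(q.den : ℤ)) * hdet
  have : (l.den : ℤ) + u.den ≤ (q.den : ℤ) := by
    rw [hq]
    have t1 : (l.den : ℤ) * 1 ≤ (l.den : ℤ) * (u.num * q.den - q.num * u.den) :=
      mul_le_mul_of_nonneg_left hb (by linarith)
    have t2 : (u.den : ℤ) * 1 ≤ (u.den : ℤ) * (q.num * l.den - l.num * q.den) :=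
      mul_le_mul_of_nonneg_left ha (by linarith)
    linarith
  exact_mod_cast this

lemma rat_gap {p q : ℚ} (h : p < q) : 1 / ((q.den : ℚ) * p.den) ≤ q - p := by
  have e : p.num * q.den < q.num * p.den := (rat_lt_iff p q).1 h
  have e1 : (1:ℤ) ≤ q.num * p.den - p.num * q.den := by linarith
  have hp : (0:ℚ) < (p.den:ℚ) := by exact_mod_cast p.pos
  have hq : (0:ℚ) < (q.den:ℚ) := by exact_mod_cast q.pos
  rw [div_le_iff₀ (by positivity)]
  have h1 : (p:ℚ) * p.den = p.num :=
    (eq_div_iff (by positivity : ((p.den:ℚ)) ≠ 0)).1 (Rat.num_div_den p).symm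
  have h2 : (q:ℚ) * q.den = q.num :=
    (eq_div_iff (by positivity : ((q.den:ℚ)) ≠ 0)).1 (Rat.num_div_den q).symm
  have expand : (q - p) * ((q.den:ℚ) * p.den) = (q.num:ℚ) * p.den - (p.num:ℚ) * q.den := by
    linear_combination ((p.den:ℚ)) * h2 - ((q.den:ℚ)) * h1
  rw [expand]
  exact_mod_cast e1

lemma mediant_between {l u : ℚ} (hdet : u.num * l.den - l.num * u.den = 1) :
    l < mediant l u ∧ mediant l u < u := by
  obtain ⟨hn, hd⟩ := mediant_num_den hdet
  constructor
  · rw [rat_lt_iff]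
    rw [hn]
    have : (((mediant l u).den : ℤ)) = (l.den : ℤ) + u.den := hd
    rw [this]
    nlinarith
  · rw [rat_lt_iff]
    rw [hn]
    have : (((mediant l u).den : ℤ)) = (l.den : ℤ) + u.den := hd
    rw [this]
    nlinarith

/-- The main invariant on `sternPair`. -/
lemma stern_inv (α : ℝ) (h0 : 0 < α) (h1 : α < 1) (hirr : Irrational α) (k : ℕ) :
    ((sternPair α k).2.num * (sternPair α k).1.den
        - (sternPair α k).1.num * (sternPair α k).2.den = 1)
    ∧ (((sternPair α k).1 : ℝ) < α) ∧ (α < ((sternPair α k).2 : ℝ))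
    ∧ (k + 2 ≤ (sternPair α k).1.den + (sternPair α k).2.den)
    ∧ (∃ i, fareyApprox α i = (sternPair α k).1)
    ∧ (∃ i, fareyApprox α i = (sternPair α k).2) := by
  induction k with
  | zero =>
      refine ⟨by norm_num [sternPair], by simpa [sternPair] using h0,
        by simpa [sternPair] using h1, by norm_num [sternPair], ⟨0, by simp [sternPair, fareyApprox]⟩,
        ⟨1, by simp [sternPair, fareyApprox]⟩⟩
  | succ k ih =>
      obtain ⟨hdet, hl, hu, hden, hl', hu'⟩ := ih
      set l := (sternPair α k).1 with hldef
      set u := (sternPair α k).2 with hudef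
      set m := mediant l u with hmdef
      obtain ⟨hmnum, hmden⟩ := mediant_num_den hdet
      rw [← hmdef] at hmnum hmden
      have hmdenN : m.den = l.den + u.den := by exact_mod_cast hmden
      have hmfarey : fareyApprox α (k + 2) = m := by
        simp [fareyApprox, hmdef, hldef, hudef]
      have hmne : (m : ℝ) ≠ α := fun h => hirr ⟨m, h⟩
      have hstep : sternPair α (k + 1) = if (m : ℝ) < α then (m, u) else (l, m) := by
        simp [sternPair, hmdef, hldef, hudef]
      by_cases hc : (m : ℝ) < α
      · rw [hstep, if_pos hc]
        refine ⟨by rw [hmnum, hmden]; linear_combination hdet, hc, hu, ?_,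
          ⟨k + 2, hmfarey⟩, hu'⟩
        simp only
        have hu1 : 1 ≤ u.den := u.pos
        omega
      · rw [hstep, if_neg hc]
        have hc' : α < (m : ℝ) := lt_of_le_of_ne (not_lt.mp hc) (Ne.symm hmne)
        refine ⟨by rw [hmnum, hmden]; linear_combination hdet, hl, hc', ?_,
          hl', ⟨k + 2, hmfarey⟩⟩
        simp only
        have hl1 : 1 ≤ l.den := l.pos
        omega

/-- For irrational 0 < α < 1 and n ≥ 1, if q is an element of the Farey
series F_n (a rational in [0,1] with denominator ≤ n) which is not a Farey approximation
to α, then |α - q| > 1/n². -/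
theorem stmt15 (α : ℝ) (h0 : 0 < α) (h1 : α < 1) (hirr : Irrational α)
    (n : ℕ) (hn : 1 ≤ n) (q : ℚ) (hq0 : 0 ≤ q) (hq1 : q ≤ 1) (hqden : q.den ≤ n)
    (hnot : ∀ k, fareyApprox α k ≠ q) :
    1 / (n : ℝ) ^ 2 < |α - (q : ℝ)| := by
  have hq0' : 0 < q := lt_of_le_of_ne hq0 (by simpa [fareyApprox] using (hnot 0))
  have hq1' : q < 1 := lt_of_le_of_ne hq1 (by
    intro h; exact hnot 1 (by simp [fareyApprox, h]))
  set P : ℕ → Prop := fun k => (sternPair α k).1 < q ∧ q < (sternPair α k).2 with hP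
  have hP0 : P 0 := by constructor <;> simp [sternPair, hq0', hq1']
  have hPnot : ∃ k, ¬ P k := by
    refine ⟨n - 1, fun hp => ?_⟩
    obtain ⟨hdet, _, _, hden, _, _⟩ := stern_inv α h0 h1 hirr (n - 1)
    obtain ⟨hp1, hp2⟩ := hp
    have h2 : (sternPair α (n-1)).1.den + (sternPair α (n-1)).2.den ≤ q.den :=
      den_between hdet hp1 hp2
    omega
  set k0 := Nat.find hPnot with hk0
  have hk0spec : ¬ P k0 := Nat.find_spec hPnot
  have hk0pos : k0 ≠ 0 := fun h => hk0spec (h ▸ hP0)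
  obtain ⟨j, hj⟩ : ∃ j, k0 = j + 1 := ⟨k0 - 1, by omega⟩
  have hPj : P j := by
    by_contra hc
    have h3 : k0 ≤ j := Nat.find_le hc
    omega
  obtain ⟨hdet, hl, hu, _, _, _⟩ := stern_inv α h0 h1 hirr j
  set l := (sternPair α j).1
  set u := (sternPair α j).2
  set m := mediant l u with hmdef
  obtain ⟨hmnum, hmden⟩ := mediant_num_den hdet
  obtain ⟨hlm, hmu⟩ := mediant_between hdet
  have hmfarey : fareyApprox α (j + 2) = m := by simp [fareyApprox, hmdef]; rfl
  have hmq : m ≠ q := hnot (j + 2) ∘ fun h => hmfarey.trans h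
  have hmdenN : m.den = l.den + u.den := by exact_mod_cast hmden
  have hmden_le : m.den ≤ n := by
    have := den_between hdet hPj.1 hPj.2
    omega
  have hmne : (m : ℝ) ≠ α := fun h => hirr ⟨m, h⟩
  have hstep : sternPair α (j + 1) = if (m : ℝ) < α then (m, u) else (l, m) := by
    simp [sternPair, hmdef]; rfl
  have hPj1 : ¬ P (j + 1) := hj ▸ hk0spec
  -- key bound: 1/n^2 < |(m:ℝ) - q| and the sign analysis
  have hnR : (0:ℝ) < (n:ℝ) := by exact_mod_cast hn
  have hqdR : (0:ℝ) < (q.den:ℝ) := by exact_mod_cast q.pos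
  have hmdR : (0:ℝ) < (m.den:ℝ) := by exact_mod_cast m.pos
  have hprod : ((m.den : ℝ) * q.den) ≤ (n:ℝ)^2 := by
    have := Nat.mul_le_mul hmden_le hqden
    calc ((m.den : ℝ) * q.den) = ((m.den * q.den : ℕ) : ℝ) := by push_cast; ring
    _ ≤ ((n * n : ℕ) : ℝ) := by exact_mod_cast this
    _ = (n:ℝ)^2 := by push_cast; ring
  have hbound : 1 / (n:ℝ)^2 ≤ 1 / ((m.den : ℝ) * q.den) :=
    one_div_le_one_div_of_le (by positivity) hprod
  by_cases hc : (m : ℝ) < α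
  · -- new pair (m, u); q < u holds, so ¬(m < q), hence q < m < α
    have hqm : q < m := by
      rcases lt_or_ge q m with h | h
      · exact h
      · exfalso
        apply hPj1
        show (sternPair α (j+1)).1 < q ∧ q < (sternPair α (j+1)).2
        rw [hstep, if_pos hc]
        exact ⟨lt_of_le_of_ne h hmq, hPj.2⟩
    have hgap : (1:ℚ) / ((m.den : ℚ) * q.den) ≤ m - q := rat_gap hqm
    have hgapR : 1 / ((m.den : ℝ) * q.den) ≤ (m:ℝ) - q := by
      have := (Rat.cast_le (K := ℝ)).2 hgap
      push_cast at this
      convert this using 2 <;> push_cast <;> ring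
    have hqα : (q:ℝ) < α := by
      calc (q:ℝ) < (m:ℝ) := by exact_mod_cast hqm
      _ < α := hc
    rw [abs_of_pos (by linarith)]
    have : (m:ℝ) - q < α - q := by linarith
    linarith
  · have hc' : α < (m : ℝ) := lt_of_le_of_ne (not_lt.mp hc) (Ne.symm hmne)
    have hmq' : m < q := by
      rcases lt_or_ge m q with h | h
      · exact h
      · exfalso
        apply hPj1
        show (sternPair α (j+1)).1 < q ∧ q < (sternPair α (j+1)).2
        rw [hstep, if_neg hc]
        exact ⟨hPj.1, lt_of_le_of_ne h (Ne.symm hmq)⟩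
    have hgap : (1:ℚ) / ((q.den : ℚ) * m.den) ≤ q - m := rat_gap hmq'
    have hgapR : 1 / ((q.den : ℝ) * m.den) ≤ (q:ℝ) - m := by
      have := (Rat.cast_le (K := ℝ)).2 hgap
      push_cast at this
      convert this using 2 <;> push_cast <;> ring
    have hqα : α < (q:ℝ) := by
      calc α < (m:ℝ) := hc'
      _ < (q:ℝ) := by exact_mod_cast hmq'
    rw [abs_of_neg (by linarith)]
    have hcomm : ((q.den : ℝ) * m.den) = ((m.den : ℝ) * q.den) := by ring
    rw [hcomm] at hgapR
    have : (q:ℝ) - m < (q:ℝ) - α := by linarith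
    linarith
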